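/- Let Ŵ1 and E1 be independent real random variables, exponentially distributed with means σ̂1² > 0 and σ_{e1}² > 0 respectively. Let P1, P2, N0, γ̄2 > 0 with λ_P := P2/P1 > γ̄2, χ = γ̄2/(λ_P − γ̄2), ρ11 = P1·σ̂1²/N0 and μ1 = (1 + χ·(1+λ_P)·σ_{e1}²/σ̂1²)^{−1}. Then the probability that the near user fails to decode the far user's signal satisfies P{ Ŵ1·P2/(Ŵ1·P1 + E1·(P1+P2) + N0) < γ̄2 } = 1 − μ1·exp(−χ/ρ11). -/

import Mathlib

/-!
Since both gains are almost surely nonnegative, decoding succeeds iff `Ŵ₁ ≥ a·E₁ + b` with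
`a = γ̄₂(P₁+P₂)/(P₂ − γ̄₂P₁)` and `b = γ̄₂N₀/(P₂ − γ̄₂P₁)`. Conditioning on `E₁`, the exponential
tail of `Ŵ₁` gives `exp(−(a·E₁ + b)/σ̂₁²)`; the Laplace transform of `E₁` at `a/σ̂₁²` is `μ₁`,
and `exp(−b/σ̂₁²) = exp(−χ/ρ₁₁)`.
-/

open MeasureTheory ProbabilityTheory

/-- The law of an exponentially distributed random variable with mean `a`:
density `(1/a)·exp(−x/a)` with respect to Lebesgue measure on `[0, ∞)`. -/
noncomputable def expMean (a : ℝ) : Measure ℝ :=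
  volume.withDensity fun x => ENNReal.ofReal (if 0 ≤ x then (1 / a) * Real.exp (-x / a) else 0)

open Real Set

namespace ProbabilityTheory

lemma expMean_eq_expMeasure (σ : ℝ) : expMean σ = expMeasure σ⁻¹ := by
  refine congrArg volume.withDensity (funext fun x => ?_)
  change _ = exponentialPDF σ⁻¹ x
  rw [exponentialPDF_eq, one_div, neg_div, div_eq_inv_mul, neg_mul_eq_mul_neg]

lemma measurable_exponentialPDF (r : ℝ) : Measurable (exponentialPDF r) :=
  (measurable_exponentialPDFReal r).ennreal_ofReal

lemma expMeasure_eq_withDensity (r : ℝ) :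
    expMeasure r = volume.withDensity (exponentialPDF r) := rfl

lemma expMeasure_ae_nonneg (r : ℝ) : ∀ᵐ x ∂expMeasure r, 0 ≤ x := by
  rw [expMeasure_eq_withDensity, ae_withDensity_iff (measurable_exponentialPDF r)]
  filter_upwards with x hx
  by_contra hneg
  exact hx (gammaPDF_of_neg (not_le.1 hneg))

lemma expMeasure_Ici {r t : ℝ} (hr : 0 < r) (ht : 0 ≤ t) :
    expMeasure r (Ici t) = ENNReal.ofReal (exp (-(r * t))) := by
  have := isProbabilityMeasure_expMeasure hr
  have hcdf : 0 ≤ 1 - exp (-(r * t)) :=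
    sub_nonneg.2 (exp_le_one_iff.2 (neg_nonpos.2 (mul_nonneg hr.le ht)))
  have hac : expMeasure r ≪ volume := withDensity_absolutelyContinuous _ _
  rw [← measure_congr (hac.ae_eq Ioi_ae_eq_Ici), ← compl_Iic,
    prob_compl_eq_one_sub measurableSet_Iic, ← ofReal_cdf, cdf_expMeasure_eq hr, if_pos ht,
    ← ENNReal.ofReal_one, ← ENNReal.ofReal_sub _ hcdf, sub_sub_cancel]

lemma lintegral_exp_neg_mul_expMeasure {r s : ℝ} (hr : 0 < r) (hs : 0 ≤ s) :
    ∫⁻ x, ENNReal.ofReal (exp (-(s * x))) ∂expMeasure r = ENNReal.ofReal (r / (r + s)) := by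
  have hdens : ∀ x, exponentialPDF r x * ENNReal.ofReal (exp (-(s * x)))
      = ENNReal.ofReal (r / (r + s)) * exponentialPDF (r + s) x := by
    intro x
    rw [exponentialPDF_eq, exponentialPDF_eq, ← ENNReal.ofReal_mul' (exp_nonneg _),
      ← ENNReal.ofReal_mul (by positivity)]
    congr 1
    split_ifs
    · rw [mul_assoc, ← exp_add, ← mul_assoc, div_mul_cancel₀ _ (by positivity)]
      ring_nf
    · simp
  rw [expMeasure_eq_withDensity, lintegral_withDensity_eq_lintegral_mul _
    (measurable_exponentialPDF r) (by fun_prop)]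
  simp_rw [Pi.mul_apply, hdens]
  rw [lintegral_const_mul' _ _ ENNReal.ofReal_ne_top,
    lintegral_exponentialPDF_eq_one (by positivity), mul_one]

lemma prod_expMeasure_setOf_le_snd {μ : Measure ℝ} [SFinite μ] {r : ℝ} (hr : 0 < r)
    {f : ℝ → ℝ} (hf : Measurable f) (hf₀ : ∀ᵐ x ∂μ, 0 ≤ f x) :
    μ.prod (expMeasure r) {p | f p.1 ≤ p.2} = ∫⁻ x, ENNReal.ofReal (exp (-(r * f x))) ∂μ := by
  have := isProbabilityMeasure_expMeasure hr
  rw [Measure.prod_apply (measurableSet_le (by fun_prop) measurable_snd)]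
  exact lintegral_congr_ae (hf₀.mono fun x hx => expMeasure_Ici hr hx)

lemma prod_expMeasure_setOf_affine_le_snd {r₁ r₂ a b : ℝ} (hr₁ : 0 < r₁) (hr₂ : 0 < r₂)
    (ha : 0 ≤ a) (hb : 0 ≤ b) :
    (expMeasure r₁).prod (expMeasure r₂) {p | a * p.1 + b ≤ p.2} =
      ENNReal.ofReal (exp (-(r₂ * b)) * (r₁ / (r₁ + r₂ * a))) := by
  have := isProbabilityMeasure_expMeasure hr₁
  have hsplit : ∀ x, exp (-(r₂ * (a * x + b))) = exp (-(r₂ * b)) * exp (-(r₂ * a * x)) :=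
    fun x => by rw [← exp_add]; ring_nf
  rw [prod_expMeasure_setOf_le_snd (f := fun x => a * x + b) hr₂ (by fun_prop)
    ((expMeasure_ae_nonneg r₁).mono fun x hx => by positivity)]
  simp_rw [hsplit, ENNReal.ofReal_mul (exp_nonneg _)]
  rw [lintegral_const_mul' _ _ ENNReal.ofReal_ne_top,
    lintegral_exp_neg_mul_expMeasure hr₁ (by positivity), ← ENNReal.ofReal_mul (exp_nonneg _)]

variable {Ω : Type*} [MeasurableSpace Ω] {P : Measure Ω} {X Y : Ω → ℝ} {r : ℝ}

lemma aemeasurable_of_map_eq_expMeasure (hr : 0 < r) (hX : P.map X = expMeasure r) :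
    AEMeasurable X P :=
  have := isProbabilityMeasure_expMeasure hr
  aemeasurable_of_map_neZero (by rw [hX]; infer_instance)

lemma ae_nonneg_of_map_eq_expMeasure (hr : 0 < r) (hX : P.map X = expMeasure r) :
    ∀ᵐ ω ∂P, 0 ≤ X ω :=
  ae_of_ae_map (aemeasurable_of_map_eq_expMeasure hr hX) (hX ▸ expMeasure_ae_nonneg r)

lemma measureReal_affine_le_of_indepFun {r₁ r₂ a b : ℝ} (hXY : IndepFun X Y P)
    (hr₁ : 0 < r₁) (hr₂ : 0 < r₂) (hX : P.map X = expMeasure r₁) (hY : P.map Y = expMeasure r₂)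
    (ha : 0 ≤ a) (hb : 0 ≤ b) :
    P.real {ω | a * X ω + b ≤ Y ω} = exp (-(r₂ * b)) * (r₁ / (r₁ + r₂ * a)) := by
  have := isProbabilityMeasure_expMeasure hr₁
  have := isProbabilityMeasure_expMeasure hr₂
  have hXm := aemeasurable_of_map_eq_expMeasure hr₁ hX
  have hYm := aemeasurable_of_map_eq_expMeasure hr₂ hY
  have hlaw : P.map (fun ω => (X ω, Y ω)) = (expMeasure r₁).prod (expMeasure r₂) := by
    rw [← hX, ← hY]
    exact (indepFun_iff_map_prod_eq_prod_map_map' hXm hYm (by rw [hX]; infer_instance)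
      (by rw [hY]; infer_instance)).mp hXY
  have hmeas : P {ω | a * X ω + b ≤ Y ω} =
      ENNReal.ofReal (exp (-(r₂ * b)) * (r₁ / (r₁ + r₂ * a))) := by
    rw [← prod_expMeasure_setOf_affine_le_snd hr₁ hr₂ ha hb, ← hlaw,
      Measure.map_apply_of_aemeasurable (hXm.prodMk hYm)
        (measurableSet_le (by fun_prop) (by fun_prop))]
    rfl
  rw [measureReal_def, hmeas, ENNReal.toReal_ofReal (by positivity)]

end ProbabilityTheory

/-- The SINR at which the near user decodes `s₂` (first step of SIC), with `w = Ŵ₁`, `e = E₁`. -/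
noncomputable def sicSINR (P₁ P₂ N₀ w e : ℝ) : ℝ := w * P₂ / (w * P₁ + e * (P₁ + P₂) + N₀)

lemma le_sicSINR_iff {P₁ P₂ N₀ γ w e : ℝ} (hP₁ : 0 < P₁) (hP₂ : 0 < P₂) (hN₀ : 0 < N₀)
    (hγ : γ * P₁ < P₂) (hw : 0 ≤ w) (he : 0 ≤ e) :
    γ ≤ sicSINR P₁ P₂ N₀ w e ↔
      γ * (P₁ + P₂) / (P₂ - γ * P₁) * e + γ * N₀ / (P₂ - γ * P₁) ≤ w := by
  have hc : 0 < P₂ - γ * P₁ := by linarith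
  rw [sicSINR, le_div_iff₀ (by positivity), div_mul_eq_mul_div, ← add_div,
    div_le_iff₀ hc]
  constructor <;> intro h <;> linarith

/-- eq. (42): probability that the near user UE1 fails to decode
the far user's signal.  With `W1 = |ĥ1|²` and `E1 = |e1|²` independent
exponentials of means `σh1 = σ̂1²`, `σe1 = σ_{e1}²`, `λ_P = P2/P1 > γ̄2`,
`χ = γ̄2/(λ_P − γ̄2)`, `ρ11 = P1·σ̂1²/N0`, `μ1 = (1 + χ·(1+λ_P)·σe1/σh1)⁻¹`:
`P{W1·P2/(W1·P1 + E1·(P1+P2) + N0) < γ̄2} = 1 − μ1·exp(−χ/ρ11)`. -/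
theorem stmt_9 {Ω : Type*} [MeasurableSpace Ω] (P : Measure Ω) [IsProbabilityMeasure P]
    (W1 E1 : Ω → ℝ) (σh1 σe1 P1 P2 N0 γ2 : ℝ)
    (hσh1 : 0 < σh1) (hσe1 : 0 < σe1)
    (hP1 : 0 < P1) (hP2 : 0 < P2) (hN0 : 0 < N0) (hγ2 : 0 < γ2)
    (hlam : γ2 < P2 / P1)
    (hind : IndepFun W1 E1 P)
    (hW1 : P.map W1 = expMean σh1) (hE1 : P.map E1 = expMean σe1)
    (lamP χ ρ11 μ1 : ℝ)
    (hlamP : lamP = P2 / P1) (hχ : χ = γ2 / (lamP - γ2))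
    (hρ11 : ρ11 = P1 * σh1 / N0) (hμ1 : μ1 = (1 + χ * (1 + lamP) * σe1 / σh1)⁻¹) :
    (P {ω | W1 ω * P2 / (W1 ω * P1 + E1 ω * (P1 + P2) + N0) < γ2}).toReal =
      1 - μ1 * Real.exp (-χ / ρ11) := by
  have hγP : γ2 * P1 < P2 := (lt_div_iff₀ hP1).1 hlam
  have hc : 0 < P2 - γ2 * P1 := sub_pos.2 hγP
  rw [expMean_eq_expMeasure] at hW1 hE1
  have hWm := aemeasurable_of_map_eq_expMeasure (inv_pos.2 hσh1) hW1
  have hEm := aemeasurable_of_map_eq_expMeasure (inv_pos.2 hσe1) hE1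
  have hcompl : {ω | γ2 ≤ sicSINR P1 P2 N0 (W1 ω) (E1 ω)}ᶜ =
      {ω | W1 ω * P2 / (W1 ω * P1 + E1 ω * (P1 + P2) + N0) < γ2} := by
    ext ω; simp [sicSINR]
  have hsucc : {ω | γ2 ≤ sicSINR P1 P2 N0 (W1 ω) (E1 ω)} =ᵐ[P]
      {ω | γ2 * (P1 + P2) / (P2 - γ2 * P1) * E1 ω + γ2 * N0 / (P2 - γ2 * P1) ≤ W1 ω} := by
    filter_upwards [ae_nonneg_of_map_eq_expMeasure (inv_pos.2 hσh1) hW1,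
      ae_nonneg_of_map_eq_expMeasure (inv_pos.2 hσe1) hE1] with ω hw he
    exact propext (le_sicSINR_iff hP1 hP2 hN0 hγP hw he)
  rw [← measureReal_def, ← hcompl, probReal_compl_eq_one_sub₀
    (nullMeasurableSet_le aemeasurable_const (by unfold sicSINR; fun_prop)),
    measureReal_congr hsucc, measureReal_affine_le_of_indepFun hind.symm (inv_pos.2 hσe1)
      (inv_pos.2 hσh1) hE1 hW1 (by positivity) (by positivity)]
  have hμ : σe1⁻¹ / (σe1⁻¹ + σh1⁻¹ * (γ2 * (P1 + P2) / (P2 - γ2 * P1))) = μ1 := by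
    subst hμ1 hχ hlamP
    field_simp
  have hχρ : -(σh1⁻¹ * (γ2 * N0 / (P2 - γ2 * P1))) = -χ / ρ11 := by
    subst hρ11 hχ hlamP
    field_simp
  rw [hμ, hχρ, mul_comm]
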